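/- If α, β, γ ≥ 2 and either (α, β are even and γ is odd) or (α, β are odd and γ ≥ 4 is even), then Θ(α, β, γ) admits a modified Tanaka quintuple with the fifth vertex lying on the path of length γ. -/
import Mathlib


/-- The vertex set of the theta graph `Θ(a,b,c)`: two endpoints `s`, `t` together with the
internal vertices `x_1,…,x_{a-1}`, `y_1,…,y_{b-1}`, `z_1,…,z_{c-1}` of the three paths
(`x i` stands for `x_{i+1}`, etc.). -/
inductive ThetaV (a b c : ℕ) : Type
  | s : ThetaV a b c
  | t : ThetaV a b c
  | x : Fin (a - 1) → ThetaV a b c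
  | y : Fin (b - 1) → ThetaV a b c
  | z : Fin (c - 1) → ThetaV a b c
deriving DecidableEq, Fintype

/-- Generating relation for the edges of the theta graph `Θ(a,b,c)`. -/
def thetaRel (a b c : ℕ) : ThetaV a b c → ThetaV a b c → Prop
  | .s, .t => a = 1 ∨ b = 1 ∨ c = 1
  | .s, .x i => (i : ℕ) = 0
  | .s, .y i => (i : ℕ) = 0
  | .s, .z i => (i : ℕ) = 0
  | .t, .x i => (i : ℕ) = a - 2
  | .t, .y i => (i : ℕ) = b - 2
  | .t, .z i => (i : ℕ) = c - 2
  | .x i, .x j => (j : ℕ) = (i : ℕ) + 1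
  | .y i, .y j => (j : ℕ) = (i : ℕ) + 1
  | .z i, .z j => (j : ℕ) = (i : ℕ) + 1
  | _, _ => False

/-- The theta graph `Θ(a,b,c)`: three internally disjoint paths of lengths `a`, `b`, `c`
joining the two common endpoints `s` and `t`. -/
def thetaGraph (a b c : ℕ) : SimpleGraph (ThetaV a b c) :=
  SimpleGraph.fromRel (thetaRel a b c)

/-- A Tanaka quintuple in a graph `G`. -/
def TanakaQuintuple {V : Type*} (G : SimpleGraph V) (v1 v2 v3 v4 v5 : V) : Prop :=
  G.Adj v1 v2 ∧ G.Adj v3 v4 ∧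
  G.dist v1 v3 = G.dist v2 v4 ∧
  G.dist v1 v4 = G.dist v1 v3 + 1 ∧
  G.dist v2 v3 = G.dist v1 v3 + 1 ∧
  G.dist v5 v2 = G.dist v5 v1 + 1 ∧
  G.dist v5 v3 = G.dist v5 v4 + 1

/-- A modified Tanaka quintuple in a graph G. -/
def ModifiedTanakaQuintuple {V : Type*} (G : SimpleGraph V) (v1 v2 v3 v4 v5 : V) : Prop :=
  G.Adj v1 v2 ∧ G.Adj v3 v4 ∧
  G.dist v1 v3 = G.dist v2 v4 ∧
  G.dist v1 v4 = G.dist v1 v3 + 1 ∧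
  G.dist v2 v3 = G.dist v1 v3 + 1 ∧
  G.dist v5 v2 = G.dist v5 v1 + 1 ∧
  G.dist v5 v3 = G.dist v5 v4

namespace ThetaAux
open SimpleGraph

/-! ### Position functions along the three paths -/

def vx (a b c p : ℕ) : ThetaV a b c :=
  if h : 0 < p ∧ p < a then .x ⟨p - 1, by omega⟩ else if p = 0 then .s else .t

def vy (a b c p : ℕ) : ThetaV a b c :=
  if h : 0 < p ∧ p < b then .y ⟨p - 1, by omega⟩ else if p = 0 then .s else .t

def vz (a b c p : ℕ) : ThetaV a b c :=
  if h : 0 < p ∧ p < c then .z ⟨p - 1, by omega⟩ else if p = 0 then .s else .t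

lemma vx_zero (a b c : ℕ) : vx a b c 0 = .s := by simp [vx]
lemma vy_zero (a b c : ℕ) : vy a b c 0 = .s := by simp [vy]
lemma vz_zero (a b c : ℕ) : vz a b c 0 = .s := by simp [vz]

lemma vx_last (a b c : ℕ) (ha : 1 ≤ a) : vx a b c a = .t := by
  unfold vx; rw [dif_neg (by omega), if_neg (by omega)]
lemma vy_last (a b c : ℕ) (hb : 1 ≤ b) : vy a b c b = .t := by
  unfold vy; rw [dif_neg (by omega), if_neg (by omega)]
lemma vz_last (a b c : ℕ) (hc : 1 ≤ c) : vz a b c c = .t := by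
  unfold vz; rw [dif_neg (by omega), if_neg (by omega)]

lemma vx_mid (a b c p : ℕ) (h0 : 0 < p) (h1 : p < a) :
    vx a b c p = .x ⟨p - 1, by omega⟩ := by unfold vx; rw [dif_pos ⟨h0, h1⟩]
lemma vy_mid (a b c p : ℕ) (h0 : 0 < p) (h1 : p < b) :
    vy a b c p = .y ⟨p - 1, by omega⟩ := by unfold vy; rw [dif_pos ⟨h0, h1⟩]
lemma vz_mid (a b c p : ℕ) (h0 : 0 < p) (h1 : p < c) :
    vz a b c p = .z ⟨p - 1, by omega⟩ := by unfold vz; rw [dif_pos ⟨h0, h1⟩]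

/-! ### Adjacency along the paths -/

lemma adj_vx (a b c p : ℕ) (ha : 2 ≤ a) (hp : p + 1 ≤ a) :
    (thetaGraph a b c).Adj (vx a b c p) (vx a b c (p + 1)) := by
  rw [thetaGraph, SimpleGraph.fromRel_adj]
  rcases Nat.eq_zero_or_pos p with rfl | hp0
  · rw [vx_zero, vx_mid a b c 1 (by omega) (by omega)]
    exact ⟨by simp, Or.inl (by simp [thetaRel])⟩
  · rcases eq_or_lt_of_le hp with heq | hlt
    · obtain rfl : a = p + 1 := heq.symm
      rw [vx_mid _ b c p hp0 (by omega), vx_last _ b c (by omega)]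
      refine ⟨by simp, Or.inr ?_⟩
      show (p - 1 : ℕ) = (p + 1) - 2
      omega
    · rw [vx_mid a b c p hp0 (by omega), vx_mid a b c (p + 1) (by omega) (by omega)]
      refine ⟨by simp [Fin.ext_iff]; omega, Or.inl ?_⟩
      show (p + 1 - 1 : ℕ) = (p - 1) + 1
      omega

lemma adj_vy (a b c p : ℕ) (hb : 2 ≤ b) (hp : p + 1 ≤ b) :
    (thetaGraph a b c).Adj (vy a b c p) (vy a b c (p + 1)) := by
  rw [thetaGraph, SimpleGraph.fromRel_adj]
  rcases Nat.eq_zero_or_pos p with rfl | hp0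
  · rw [vy_zero, vy_mid a b c 1 (by omega) (by omega)]
    exact ⟨by simp, Or.inl (by simp [thetaRel])⟩
  · rcases eq_or_lt_of_le hp with heq | hlt
    · obtain rfl : b = p + 1 := heq.symm
      rw [vy_mid a _ c p hp0 (by omega), vy_last a _ c (by omega)]
      refine ⟨by simp, Or.inr ?_⟩
      show (p - 1 : ℕ) = (p + 1) - 2
      omega
    · rw [vy_mid a b c p hp0 (by omega), vy_mid a b c (p + 1) (by omega) (by omega)]
      refine ⟨by simp [Fin.ext_iff]; omega, Or.inl ?_⟩
      show (p + 1 - 1 : ℕ) = (p - 1) + 1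
      omega

lemma adj_vz (a b c p : ℕ) (hc : 2 ≤ c) (hp : p + 1 ≤ c) :
    (thetaGraph a b c).Adj (vz a b c p) (vz a b c (p + 1)) := by
  rw [thetaGraph, SimpleGraph.fromRel_adj]
  rcases Nat.eq_zero_or_pos p with rfl | hp0
  · rw [vz_zero, vz_mid a b c 1 (by omega) (by omega)]
    exact ⟨by simp, Or.inl (by simp [thetaRel])⟩
  · rcases eq_or_lt_of_le hp with heq | hlt
    · obtain rfl : c = p + 1 := heq.symm
      rw [vz_mid a b _ p hp0 (by omega), vz_last a b _ (by omega)]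
      refine ⟨by simp, Or.inr ?_⟩
      show (p - 1 : ℕ) = (p + 1) - 2
      omega
    · rw [vz_mid a b c p hp0 (by omega), vz_mid a b c (p + 1) (by omega) (by omega)]
      refine ⟨by simp [Fin.ext_iff]; omega, Or.inl ?_⟩
      show (p + 1 - 1 : ℕ) = (p - 1) + 1
      omega

/-! ### Walks along the paths -/

lemma walk_vx (a b c : ℕ) (ha : 2 ≤ a) {p q : ℕ} (hpq : p ≤ q) (hq : q ≤ a) :
    ∃ w : (thetaGraph a b c).Walk (vx a b c p) (vx a b c q), w.length = q - p := by
  induction q, hpq using Nat.le_induction with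
  | base => exact ⟨.nil, by simp⟩
  | succ q hq' ih =>
    obtain ⟨w, hw⟩ := ih (by omega)
    exact ⟨w.concat (adj_vx a b c q ha (by omega)), by
      rw [SimpleGraph.Walk.length_concat]; omega⟩

lemma walk_vy (a b c : ℕ) (hb : 2 ≤ b) {p q : ℕ} (hpq : p ≤ q) (hq : q ≤ b) :
    ∃ w : (thetaGraph a b c).Walk (vy a b c p) (vy a b c q), w.length = q - p := by
  induction q, hpq using Nat.le_induction with
  | base => exact ⟨.nil, by simp⟩
  | succ q hq' ih =>
    obtain ⟨w, hw⟩ := ih (by omega)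
    exact ⟨w.concat (adj_vy a b c q hb (by omega)), by
      rw [SimpleGraph.Walk.length_concat]; omega⟩

lemma walk_vz (a b c : ℕ) (hc : 2 ≤ c) {p q : ℕ} (hpq : p ≤ q) (hq : q ≤ c) :
    ∃ w : (thetaGraph a b c).Walk (vz a b c p) (vz a b c q), w.length = q - p := by
  induction q, hpq using Nat.le_induction with
  | base => exact ⟨.nil, by simp⟩
  | succ q hq' ih =>
    obtain ⟨w, hw⟩ := ih (by omega)
    exact ⟨w.concat (adj_vz a b c q hc (by omega)), by
      rw [SimpleGraph.Walk.length_concat]; omega⟩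

/-! ### Upper bounds for distances, going through `s` or `t` -/

lemma dist_xy_s (a b c : ℕ) (ha : 2 ≤ a) (hb : 2 ≤ b) {p q : ℕ} (hp : p ≤ a) (hq : q ≤ b) :
    (thetaGraph a b c).dist (vx a b c p) (vy a b c q) ≤ p + q := by
  obtain ⟨w1, e1⟩ := walk_vx a b c ha (Nat.zero_le p) hp
  obtain ⟨w2, e2⟩ := walk_vy a b c hb (Nat.zero_le q) hq
  have := SimpleGraph.dist_le
    ((w1.reverse.copy rfl (vx_zero a b c)).append (w2.copy (vy_zero a b c) rfl))
  simpa [e1, e2] using this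

lemma dist_xy_t (a b c : ℕ) (ha : 2 ≤ a) (hb : 2 ≤ b) {p q : ℕ} (hp : p ≤ a) (hq : q ≤ b) :
    (thetaGraph a b c).dist (vx a b c p) (vy a b c q) ≤ (a - p) + (b - q) := by
  obtain ⟨w1, e1⟩ := walk_vx a b c ha hp le_rfl
  obtain ⟨w2, e2⟩ := walk_vy a b c hb hq le_rfl
  have := SimpleGraph.dist_le
    ((w1.copy rfl (vx_last a b c (by omega))).append
      ((w2.copy rfl (vy_last a b c (by omega))).reverse))
  simpa [e1, e2] using this

lemma dist_zx_s (a b c : ℕ) (ha : 2 ≤ a) (hc : 2 ≤ c) {r p : ℕ} (hr : r ≤ c) (hp : p ≤ a) :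
    (thetaGraph a b c).dist (vz a b c r) (vx a b c p) ≤ r + p := by
  obtain ⟨w1, e1⟩ := walk_vz a b c hc (Nat.zero_le r) hr
  obtain ⟨w2, e2⟩ := walk_vx a b c ha (Nat.zero_le p) hp
  have := SimpleGraph.dist_le
    ((w1.reverse.copy rfl (vz_zero a b c)).append (w2.copy (vx_zero a b c) rfl))
  simpa [e1, e2] using this

lemma dist_zy_s (a b c : ℕ) (hb : 2 ≤ b) (hc : 2 ≤ c) {r q : ℕ} (hr : r ≤ c) (hq : q ≤ b) :
    (thetaGraph a b c).dist (vz a b c r) (vy a b c q) ≤ r + q := by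
  obtain ⟨w1, e1⟩ := walk_vz a b c hc (Nat.zero_le r) hr
  obtain ⟨w2, e2⟩ := walk_vy a b c hb (Nat.zero_le q) hq
  have := SimpleGraph.dist_le
    ((w1.reverse.copy rfl (vz_zero a b c)).append (w2.copy (vy_zero a b c) rfl))
  simpa [e1, e2] using this

lemma dist_zy_t (a b c : ℕ) (hb : 2 ≤ b) (hc : 2 ≤ c) {r q : ℕ} (hr : r ≤ c) (hq : q ≤ b) :
    (thetaGraph a b c).dist (vz a b c r) (vy a b c q) ≤ (c - r) + (b - q) := by
  obtain ⟨w1, e1⟩ := walk_vz a b c hc hr le_rfl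
  obtain ⟨w2, e2⟩ := walk_vy a b c hb hq le_rfl
  have := SimpleGraph.dist_le
    ((w1.copy rfl (vz_last a b c (by omega))).append
      ((w2.copy rfl (vy_last a b c (by omega))).reverse))
  simpa [e1, e2] using this

/-! ### Connectivity -/

lemma theta_reachable (a b c : ℕ) (ha : 2 ≤ a) (hb : 2 ≤ b) (hc : 2 ≤ c)
    (u v : ThetaV a b c) : (thetaGraph a b c).Reachable u v := by
  have hs : ∀ u : ThetaV a b c, (thetaGraph a b c).Reachable .s u := by
    rintro (_ | _ | i | i | i)
    · exact SimpleGraph.Reachable.refl _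
    · obtain ⟨w, _⟩ := walk_vx a b c ha (Nat.zero_le a) le_rfl
      exact ⟨w.copy (vx_zero a b c) (vx_last a b c (by omega))⟩
    · obtain ⟨w, _⟩ := walk_vx a b c ha (Nat.zero_le ((i : ℕ) + 1)) (by omega)
      refine ⟨w.copy (vx_zero a b c) ?_⟩
      rw [vx_mid a b c ((i : ℕ) + 1) (by omega) (by omega)]
      exact congrArg ThetaV.x (Fin.ext (by simp))
    · obtain ⟨w, _⟩ := walk_vy a b c hb (Nat.zero_le ((i : ℕ) + 1)) (by omega)
      refine ⟨w.copy (vy_zero a b c) ?_⟩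
      rw [vy_mid a b c ((i : ℕ) + 1) (by omega) (by omega)]
      exact congrArg ThetaV.y (Fin.ext (by simp))
    · obtain ⟨w, _⟩ := walk_vz a b c hc (Nat.zero_le ((i : ℕ) + 1)) (by omega)
      refine ⟨w.copy (vz_zero a b c) ?_⟩
      rw [vz_mid a b c ((i : ℕ) + 1) (by omega) (by omega)]
      exact congrArg ThetaV.z (Fin.ext (by simp))
  exact (hs u).symm.trans (hs v)

/-! ### Lower bounds via Lipschitz potentials -/

lemma le_dist_of_lip {V : Type*} {G : SimpleGraph V} {f : V → ℕ}
    (hf : ∀ u v, G.Adj u v → f u ≤ f v + 1) {u v : V} (hr : G.Reachable u v) :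
    f u ≤ f v + G.dist u v := by
  obtain ⟨p, hp⟩ := hr.exists_walk_length_eq_dist
  rw [← hp]
  clear hp hr
  induction p with
  | nil => simp
  | cons h q ih =>
    have h1 := hf _ _ h
    rw [SimpleGraph.Walk.length_cons]
    omega

/-- Potential: distance towards position `g` along the `b`-path. -/
def fY (a b c g : ℕ) : ThetaV a b c → ℕ
  | .s => g
  | .t => b - g
  | .x i => min ((i : ℕ) + 1 + g) (a - ((i : ℕ) + 1) + (b - g))
  | .z i => min ((i : ℕ) + 1 + g) (c - ((i : ℕ) + 1) + (b - g))
  | .y i => ((i : ℕ) + 1 - g) + (g - ((i : ℕ) + 1))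

/-- Potential: distance towards the vertex `z k` on the `c`-path. -/
def fZ (a b c k : ℕ) : ThetaV a b c → ℕ
  | .s => k + 1
  | .t => c - 1 - k
  | .x i => min ((i : ℕ) + 1 + (k + 1)) (a - ((i : ℕ) + 1) + (c - 1 - k))
  | .y i => min ((i : ℕ) + 1 + (k + 1)) (b - ((i : ℕ) + 1) + (c - 1 - k))
  | .z i => ((i : ℕ) + 1 - (k + 1)) + ((k + 1) - ((i : ℕ) + 1))

lemma fY_lip (a b c g : ℕ) (ha : 2 ≤ a) (hb : 2 ≤ b) (hc : 2 ≤ c)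
    (h1 : g ≤ b) (h2 : 2 * g ≤ a + b) (h3 : 2 * g ≤ b + c)
    (h4 : b ≤ a + 2 * g) (h5 : b ≤ c + 2 * g) :
    ∀ u v, (thetaGraph a b c).Adj u v → fY a b c g u ≤ fY a b c g v + 1 := by
  intro u v h
  rw [thetaGraph, SimpleGraph.fromRel_adj] at h
  obtain ⟨hne, h⟩ := h
  rcases u with _ | _ | ⟨i, hi⟩ | ⟨i, hi⟩ | ⟨i, hi⟩ <;>
    rcases v with _ | _ | ⟨j, hj⟩ | ⟨j, hj⟩ | ⟨j, hj⟩ <;>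
    simp only [fY, thetaRel, false_or, or_false, or_self] at h ⊢ <;>
    omega

lemma fZ_lip (a b c k : ℕ) (ha : 2 ≤ a) (hb : 2 ≤ b) (hc : 2 ≤ c)
    (h1 : k + 2 ≤ c) (h2 : 2 * k + 2 ≤ a + c) (h3 : 2 * k + 2 ≤ b + c)
    (h4 : c ≤ a + 2 * k + 2) (h5 : c ≤ b + 2 * k + 2) :
    ∀ u v, (thetaGraph a b c).Adj u v → fZ a b c k u ≤ fZ a b c k v + 1 := by
  intro u v h
  rw [thetaGraph, SimpleGraph.fromRel_adj] at h
  obtain ⟨hne, h⟩ := h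
  rcases u with _ | _ | ⟨i, hi⟩ | ⟨i, hi⟩ | ⟨i, hi⟩ <;>
    rcases v with _ | _ | ⟨j, hj⟩ | ⟨j, hj⟩ | ⟨j, hj⟩ <;>
    simp only [fZ, thetaRel, false_or, or_false, or_self] at h ⊢ <;>
    omega


/-! ### Evaluation of potentials and the key construction -/

lemma key (a b c α β k : ℕ) (ha : 2 ≤ a) (hc : 2 ≤ c) (hab : a ≤ b)
    (hk : 2 * k + a + 1 = 2 * α + c) (hβ : 2 * β + 2 * α + 2 = a + b)
    (hα : α = 0 ∨ 2 * α + 2 ≤ a) :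
    ModifiedTanakaQuintuple (thetaGraph a b c) (vx a b c α) (vx a b c (α + 1))
      (vy a b c β) (vy a b c (β + 1)) (vz a b c (k + 1)) := by
  have hb : 2 ≤ b := ha.trans hab
  have hα2 : 2 * α + 1 ≤ a := by rcases hα with h | h <;> omega
  have hkc : k + 2 ≤ c := by omega
  have hβ1 : 1 ≤ β := by rcases hα with h | h <;> omega
  have hβb : β + 1 ≤ b := by omega
  -- arithmetic facts for the upper bounds
  have U24 : a - (α + 1) + (b - (β + 1)) ≤ α + β := by omega
  have U14 : α + (β + 1) ≤ α + β + 1 := by omega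
  have U23 : a - (α + 1) + (b - β) ≤ α + β + 1 := by omega
  have U51 : k + 1 + α ≤ α + k + 1 := by omega
  have U52 : k + 1 + (α + 1) ≤ α + k + 2 := by omega
  have U53 : k + 1 + β ≤ β + k + 1 := by omega
  have U54 : c - (k + 1) + (b - (β + 1)) ≤ β + k + 1 := by omega
  have B1 : α ≤ a := by omega
  have B2 : α + 1 ≤ a := by omega
  have B3 : β ≤ b := by omega
  have B5 : k + 1 ≤ c := by omega
  have hreach := theta_reachable a b c ha hb hc
  have lip1 := fY_lip a b c β ha hb hc (by omega) (by omega) (by omega) (by omega) (by omega)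
  have lip2 := fY_lip a b c (β + 1) ha hb hc (by omega) (by omega) (by omega) (by omega)
    (by omega)
  have lip3 := fZ_lip a b c k ha hb hc (by omega) (by omega) (by omega) (by omega) (by omega)
  have hv2 := vx_mid a b c (α + 1) (by omega) (by omega)
  have hv3 := vy_mid a b c β (by omega) (by omega)
  have hv5 := vz_mid a b c (k + 1) (by omega) (by omega)
  -- potential values
  have E1 : fY a b c β (vx a b c α) = α + β := by
    rcases Nat.eq_zero_or_pos α with h0 | hpos
    · subst h0; rw [vx_zero]; simp [fY]
    · rw [vx_mid a b c α (by omega) (by omega)]; simp only [fY, Fin.val_mk]; omega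
  have E2 : fY a b c β (vx a b c (α + 1)) = α + β + 1 := by
    rw [hv2]; simp only [fY, Fin.val_mk]; omega
  have E3 : fY a b c β (vy a b c β) = 0 := by
    rw [hv3]; simp only [fY, Fin.val_mk]; omega
  have E4 : fY a b c (β + 1) (vx a b c α) = α + β + 1 := by
    rcases Nat.eq_zero_or_pos α with h0 | hpos
    · subst h0; rw [vx_zero]; simp [fY]
    · rw [vx_mid a b c α (by omega) (by omega)]; simp only [fY, Fin.val_mk]; omega
  have E5 : fY a b c (β + 1) (vx a b c (α + 1)) = α + β := by
    rw [hv2]; simp only [fY, Fin.val_mk]; omega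
  have E6 : fY a b c (β + 1) (vy a b c (β + 1)) = 0 := by
    rcases eq_or_lt_of_le hβb with he | hlt
    · rw [he, vy_last a b c (by omega)]; simp only [fY, Fin.val_mk]; omega
    · rw [vy_mid a b c (β + 1) (by omega) (by omega)]; simp only [fY, Fin.val_mk]; omega
  have E7 : fZ a b c k (vx a b c α) = α + k + 1 := by
    rcases Nat.eq_zero_or_pos α with h0 | hpos
    · subst h0; rw [vx_zero]; simp [fZ]
    · rw [vx_mid a b c α (by omega) (by omega)]; simp only [fZ, Fin.val_mk]; omega
  have E8 : fZ a b c k (vx a b c (α + 1)) = α + k + 2 := by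
    rw [hv2]; simp only [fZ, Fin.val_mk]; omega
  have E9 : fZ a b c k (vy a b c β) = β + k + 1 := by
    rw [hv3]; simp only [fZ, Fin.val_mk]; omega
  have E10 : fZ a b c k (vy a b c (β + 1)) = β + k + 1 := by
    rcases eq_or_lt_of_le hβb with he | hlt
    · rw [he, vy_last a b c (by omega)]; simp only [fZ, Fin.val_mk]; omega
    · rw [vy_mid a b c (β + 1) (by omega) (by omega)]; simp only [fZ, Fin.val_mk]; omega
  have E11 : fZ a b c k (vz a b c (k + 1)) = 0 := by
    rw [hv5]; simp only [fZ, Fin.val_mk]; omega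
  -- the eight distances
  have d13 : (thetaGraph a b c).dist (vx a b c α) (vy a b c β) = α + β := by
    refine le_antisymm (dist_xy_s a b c ha hb (p := α) (q := β) B1 B3) ?_
    have h := le_dist_of_lip lip1 (hreach (vx a b c α) (vy a b c β))
    rw [E1, E3, Nat.zero_add] at h; exact h
  have d24 : (thetaGraph a b c).dist (vx a b c (α + 1)) (vy a b c (β + 1)) = α + β := by
    refine le_antisymm (le_trans
      (dist_xy_t a b c ha hb (p := α + 1) (q := β + 1) B2 hβb) U24) ?_
    have h := le_dist_of_lip lip2 (hreach (vx a b c (α + 1)) (vy a b c (β + 1)))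
    rw [E5, E6, Nat.zero_add] at h; exact h
  have d14 : (thetaGraph a b c).dist (vx a b c α) (vy a b c (β + 1)) = α + β + 1 := by
    refine le_antisymm (le_trans
      (dist_xy_s a b c ha hb (p := α) (q := β + 1) B1 hβb) U14) ?_
    have h := le_dist_of_lip lip2 (hreach (vx a b c α) (vy a b c (β + 1)))
    rw [E4, E6, Nat.zero_add] at h; exact h
  have d23 : (thetaGraph a b c).dist (vx a b c (α + 1)) (vy a b c β) = α + β + 1 := by
    refine le_antisymm (le_trans
      (dist_xy_t a b c ha hb (p := α + 1) (q := β) B2 B3) U23) ?_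
    have h := le_dist_of_lip lip1 (hreach (vx a b c (α + 1)) (vy a b c β))
    rw [E2, E3, Nat.zero_add] at h; exact h
  have d51 : (thetaGraph a b c).dist (vz a b c (k + 1)) (vx a b c α) = α + k + 1 := by
    refine le_antisymm (le_trans
      (dist_zx_s a b c ha hc (r := k + 1) (p := α) B5 B1) U51) ?_
    have h := le_dist_of_lip lip3 (hreach (vx a b c α) (vz a b c (k + 1)))
    rw [E7, E11, Nat.zero_add, SimpleGraph.dist_comm] at h; exact h
  have d52 : (thetaGraph a b c).dist (vz a b c (k + 1)) (vx a b c (α + 1)) = α + k + 2 := by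
    refine le_antisymm (le_trans
      (dist_zx_s a b c ha hc (r := k + 1) (p := α + 1) B5 B2) U52) ?_
    have h := le_dist_of_lip lip3 (hreach (vx a b c (α + 1)) (vz a b c (k + 1)))
    rw [E8, E11, Nat.zero_add, SimpleGraph.dist_comm] at h; exact h
  have d53 : (thetaGraph a b c).dist (vz a b c (k + 1)) (vy a b c β) = β + k + 1 := by
    refine le_antisymm (le_trans
      (dist_zy_s a b c hb hc (r := k + 1) (q := β) B5 B3) U53) ?_
    have h := le_dist_of_lip lip3 (hreach (vy a b c β) (vz a b c (k + 1)))
    rw [E9, E11, Nat.zero_add, SimpleGraph.dist_comm] at h; exact h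
  have d54 : (thetaGraph a b c).dist (vz a b c (k + 1)) (vy a b c (β + 1)) = β + k + 1 := by
    refine le_antisymm (le_trans
      (dist_zy_t a b c hb hc (r := k + 1) (q := β + 1) B5 hβb) U54) ?_
    have h := le_dist_of_lip lip3 (hreach (vy a b c (β + 1)) (vz a b c (k + 1)))
    rw [E10, E11, Nat.zero_add, SimpleGraph.dist_comm] at h; exact h
  exact ⟨adj_vx a b c α ha B2, adj_vy a b c β hb hβb,
    by rw [d13, d24], by rw [d14, d13], by rw [d23, d13],
    by rw [d52, d51], by rw [d53, d54]⟩

/-! ### The swap isomorphism -/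

def swapFun (a b c : ℕ) : ThetaV a b c → ThetaV b a c
  | .s => .s
  | .t => .t
  | .x i => .y i
  | .y i => .x i
  | .z i => .z i

def swapIso (a b c : ℕ) : thetaGraph a b c ≃g thetaGraph b a c where
  toEquiv := ⟨swapFun a b c, swapFun b a c, fun u => by cases u <;> rfl,
    fun u => by cases u <;> rfl⟩
  map_rel_iff' := by
    intro u v
    show (thetaGraph b a c).Adj (swapFun a b c u) (swapFun a b c v) ↔
      (thetaGraph a b c).Adj u v
    rw [thetaGraph, thetaGraph, SimpleGraph.fromRel_adj, SimpleGraph.fromRel_adj]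
    cases u <;> cases v <;> simp [swapFun, thetaRel] <;> tauto

lemma iso_dist_le {V W : Type*} {G : SimpleGraph V} {H : SimpleGraph W} (e : G ≃g H)
    (u v : V) : H.dist (e u) (e v) ≤ G.dist u v := by
  by_cases h : G.Reachable u v
  · obtain ⟨p, hp⟩ := h.exists_walk_length_eq_dist
    have := SimpleGraph.dist_le (p.map e.toHom)
    rwa [SimpleGraph.Walk.length_map, hp] at this
  · rw [SimpleGraph.dist_eq_zero_of_not_reachable h,
      SimpleGraph.dist_eq_zero_of_not_reachable]
    intro hr
    apply h
    have := hr.map e.symm.toHom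
    simpa using this

lemma iso_dist_eq {V W : Type*} {G : SimpleGraph V} {H : SimpleGraph W} (e : G ≃g H)
    (u v : V) : H.dist (e u) (e v) = G.dist u v := by
  refine le_antisymm (iso_dist_le e u v) ?_
  have := iso_dist_le e.symm (e u) (e v)
  simpa using this

lemma mtq_map {V W : Type*} {G : SimpleGraph V} {H : SimpleGraph W} (e : G ≃g H)
    {v1 v2 v3 v4 v5 : V} (h : ModifiedTanakaQuintuple G v1 v2 v3 v4 v5) :
    ModifiedTanakaQuintuple H (e v1) (e v2) (e v3) (e v4) (e v5) := by
  obtain ⟨h1, h2, h3, h4, h5, h6, h7⟩ := h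
  refine ⟨e.map_adj_iff.mpr h1, e.map_adj_iff.mpr h2, ?_, ?_, ?_, ?_, ?_⟩ <;>
    rw [iso_dist_eq e, iso_dist_eq e] <;> omega

end ThetaAux


/-- If a, b, c >= 2 and either (a, b even and c odd) or (a, b odd and c >= 4 even),
then Theta(a,b,c) admits a modified Tanaka quintuple with the fifth vertex on the
path of length c. -/
theorem stmt15 (a b c : ℕ) (ha : 2 ≤ a) (hb : 2 ≤ b) (hc : 2 ≤ c)
    (hpar : (Even a ∧ Even b ∧ Odd c) ∨ (Odd a ∧ Odd b ∧ Even c ∧ 4 ≤ c)) :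
    ∃ v1 v2 v3 v4 v5 : ThetaV a b c,
      ModifiedTanakaQuintuple (thetaGraph a b c) v1 v2 v3 v4 v5 ∧
      (v5 = ThetaV.s ∨ v5 = ThetaV.t ∨ ∃ i, v5 = ThetaV.z i) := by
  classical
  have hf1 : a % 2 = b % 2 := by
    rcases hpar with ⟨h1, h2, _⟩ | ⟨h1, h2, _, _⟩ <;>
      simp [Nat.even_iff, Nat.odd_iff] at h1 h2 <;> omega
  have hf2 : a % 2 ≠ c % 2 := by
    rcases hpar with ⟨h1, _, h3⟩ | ⟨h1, _, h3, _⟩ <;>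
      simp [Nat.even_iff, Nat.odd_iff] at h1 h3 <;> omega
  have hf3 : 3 ≤ c := by
    rcases hpar with ⟨_, _, h3⟩ | ⟨_, _, _, h4⟩ <;>
      simp [Nat.even_iff, Nat.odd_iff] at * <;> omega
  rcases le_total a b with hab | hba
  · rcases lt_or_gt_of_ne (show a ≠ c by omega) with hac | hca
    · have H := ThetaAux.key a b c 0 ((a + b - 2) / 2) ((c - a - 1) / 2) ha hc hab
        (by omega) (by omega) (Or.inl rfl)
      refine ⟨_, _, _, _, _, H, ?_⟩
      right; right
      refine ⟨⟨(c - a - 1) / 2, by omega⟩, ?_⟩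
      rw [ThetaAux.vz_mid a b c ((c - a - 1) / 2 + 1) (by omega) (by omega)]
      exact congrArg ThetaV.z (Fin.ext (by simp))
    · have H := ThetaAux.key a b c ((a - c + 1) / 2) ((b + c - 3) / 2) 0 ha hc hab
        (by omega) (by omega) (Or.inr (by omega))
      refine ⟨_, _, _, _, _, H, ?_⟩
      right; right
      refine ⟨⟨0, by omega⟩, ?_⟩
      rw [ThetaAux.vz_mid a b c 1 (by omega) (by omega)]
  · rcases lt_or_gt_of_ne (show b ≠ c by omega) with hbc | hcb
    · have H := ThetaAux.key b a c 0 ((b + a - 2) / 2) ((c - b - 1) / 2) hb hc hba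
        (by omega) (by omega) (Or.inl rfl)
      have H2 := ThetaAux.mtq_map (ThetaAux.swapIso b a c) H
      refine ⟨_, _, _, _, _, H2, ?_⟩
      right; right
      refine ⟨⟨(c - b - 1) / 2, by omega⟩, ?_⟩
      show ThetaAux.swapFun b a c _ = _
      rw [ThetaAux.vz_mid b a c ((c - b - 1) / 2 + 1) (by omega) (by omega)]
      exact congrArg ThetaV.z (Fin.ext (by simp))
    · have H := ThetaAux.key b a c ((b - c + 1) / 2) ((a + c - 3) / 2) 0 hb hc hba
        (by omega) (by omega) (Or.inr (by omega))
      have H2 := ThetaAux.mtq_map (ThetaAux.swapIso b a c) H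
      refine ⟨_, _, _, _, _, H2, ?_⟩
      right; right
      refine ⟨⟨0, by omega⟩, ?_⟩
      show ThetaAux.swapFun b a c _ = _
      rw [ThetaAux.vz_mid b a c 1 (by omega) (by omega)]
      rfl
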